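/- Let G be a finite connected weighted graph with coalescence times (τ_{ij}), and for 0 < u ≤ 1 let (q_{ij}(u)) be the unique solution of the identity-by-descent system q_{ii}(u) = 1 and q_{ij}(u) = ((1−u)/2) Σ_{k∈V} (p_{ik} q_{jk}(u) + p_{jk} q_{ik}(u)) for i ≠ j. Then for every pair of vertices i, j, the limit as u → 0⁺ of (1 − q_{ij}(u))/u exists and equals τ_{ij}; that is, q_{ij}(u) = 1 − u τ_{ij} + O(u²) as u → 0⁺. -/

import Mathlib

/-!
Put `r = (1 - q) / u`. The IBD system becomes the coalescence system for the pair walk killed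
at rate `u`: `r = 1 + (1 - u) A r` off the diagonal, where `A` averages over one step of the pair
walk. By a minimum principle for `A` (the graph is connected and the functions involved vanish on
the diagonal), `q ≤ 1` gives `0 ≤ r ≤ τ`; and since `τ - r = A (τ - r) + u A r` with
`A r ≤ max τ`, the same principle gives `τ - r ≤ u (max τ) τ`. So `r = τ + O(u)`.
-/

open Finset Filter Asymptotics

noncomputable section

namespace EvoGraph

variable {V : Type*} [Fintype V] [DecidableEq V]

/-- Weighted degree `w_i = ∑_j w_{ij}`. -/
def deg (w : V → V → ℝ) (i : V) : ℝ := ∑ j, w i j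

/-- Total edge weight `W = ∑_i w_i`. -/
def Wtot (w : V → V → ℝ) : ℝ := ∑ i, deg w i

/-- Random-walk step probability `p_{ij} = w_{ij}/w_i`. -/
def step (w : V → V → ℝ) (i j : V) : ℝ := w i j / deg w i

/-- The stochastic matrix `(p_{ij})`. -/
def stepMat (w : V → V → ℝ) : Matrix V V ℝ := Matrix.of fun i j => step w i j

/-- `n`-step probability `p^{(n)}_{ij}`: the `(i,j)` entry of the `n`-th power of `(p_{ij})`. -/
def stepN (w : V → V → ℝ) (n : ℕ) (i j : V) : ℝ := (stepMat w ^ n) i j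

/-- Stationary distribution `π_i = w_i / W`. -/
def statDist (w : V → V → ℝ) (i : V) : ℝ := deg w i / Wtot w

/-- `w` is a finite connected weighted graph: symmetric nonnegative weights
(self-loops allowed), positive weighted degrees, and any two vertices joined by
a path of edges of positive weight. -/
def IsWeightedGraph (w : V → V → ℝ) : Prop :=
  (∀ i j, w i j = w j i) ∧ (∀ i j, 0 ≤ w i j) ∧ (∀ i, 0 < deg w i) ∧
  ∀ i j : V, Relation.ReflTransGen (fun a b => 0 < w a b) i j

/-- `τ` is the (symmetric) solution of the coalescence-time system:
`τ_{ii} = 0`, and `τ_{ij} = 1 + (1/2) ∑_k (p_{ik} τ_{kj} + p_{jk} τ_{ik})` for `i ≠ j`. -/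
def IsCoalescent (w : V → V → ℝ) (τ : V → V → ℝ) : Prop :=
  (∀ i j, τ i j = τ j i) ∧ (∀ i, τ i i = 0) ∧
  ∀ i j, i ≠ j →
    τ i j = 1 + (1 / 2) * ∑ k, (step w i k * τ k j + step w j k * τ i k)

/-- `τ^{(n)} = ∑_{i,j} π_i p^{(n)}_{ij} τ_{ij}`. -/
def tauWalk (w τ : V → V → ℝ) (n : ℕ) : ℝ :=
  ∑ i, ∑ j, statDist w i * stepN w n i j * τ i j

/-- Remeeting time `τ⁺_i = 1 + ∑_j p_{ij} τ_{ij}`. -/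
def remeet (w τ : V → V → ℝ) (i : V) : ℝ := 1 + ∑ j, step w i j * τ i j

/-- `q` solves the identity-by-descent system with mutation probability `u`:
`q_{ii} = 1`, and `q_{ij} = ((1−u)/2) ∑_k (p_{ik} q_{jk} + p_{jk} q_{ik})` for
`i ≠ j`, with the unknowns required to be symmetric. -/
def IsIBD (w : V → V → ℝ) (u : ℝ) (q : V → V → ℝ) : Prop :=
  (∀ i j, q i j = q j i) ∧ (∀ i, q i i = 1) ∧
  ∀ i j, i ≠ j →
    q i j = ((1 - u) / 2) * ∑ k, (step w i k * q j k + step w j k * q i k)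

section PairWalk

omit [DecidableEq V]

/-- The expected value of `g` after one step of the pair walk from `(i, j)`: one of the two
walkers, chosen uniformly, takes a random-walk step. -/
def pairAvg (w g : V → V → ℝ) (i j : V) : ℝ :=
  (1 / 2) * ∑ k, (step w i k * g k j + step w j k * g i k)

variable {w : V → V → ℝ}

theorem pairAvg_sub (g h : V → V → ℝ) (i j : V) :
    pairAvg w (fun a b => g a b - h a b) i j = pairAvg w g i j - pairAvg w h i j := by
  simp only [pairAvg, ← mul_sub, ← sum_sub_distrib]
  exact congrArg _ (sum_congr rfl fun k _ => by ring)

theorem pairAvg_const_mul (c : ℝ) (g : V → V → ℝ) (i j : V) :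
    pairAvg w (fun a b => c * g a b) i j = c * pairAvg w g i j := by
  simp only [pairAvg, mul_sum]
  exact sum_congr rfl fun k _ => by ring

variable (hG : IsWeightedGraph w)
include hG

theorem step_nonneg (i j : V) : 0 ≤ step w i j :=
  div_nonneg (hG.2.1 i j) (hG.2.2.1 i).le

theorem sum_step (i : V) : ∑ k, step w i k = 1 := by
  simp only [step]
  rw [← sum_div]
  exact div_self (hG.2.2.1 i).ne'

theorem le_sum_step_mul {f : V → ℝ} {β : ℝ} (hf : ∀ k, β ≤ f k) (i : V) :
    β ≤ ∑ k, step w i k * f k :=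
  calc β = ∑ k, step w i k * β := by rw [← sum_mul, sum_step hG, one_mul]
    _ ≤ ∑ k, step w i k * f k :=
      sum_le_sum fun k _ => mul_le_mul_of_nonneg_left (hf k) (step_nonneg hG i k)

theorem pairAvg_const (c : ℝ) (i j : V) : pairAvg w (fun _ _ => c) i j = c := by
  simp only [pairAvg, sum_add_distrib, ← sum_mul, sum_step hG]
  ring

theorem pairAvg_mono {g h : V → V → ℝ} (hgh : ∀ a b, g a b ≤ h a b) (i j : V) :
    pairAvg w g i j ≤ pairAvg w h i j := by
  unfold pairAvg
  gcongr <;> first | exact step_nonneg hG _ _ | exact hgh _ _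

theorem eq_of_sum_step_mul_le {f : V → ℝ} {β : ℝ} (hf : ∀ k, β ≤ f k) {i : V}
    (hsum : ∑ k, step w i k * f k ≤ β) {k : V} (hk : 0 < w i k) : f k = β := by
  have hzero : ∑ m, step w i m * (f m - β) = 0 := by
    have : ∑ m, step w i m * (f m - β) = ∑ m, step w i m * f m - β := by
      simp only [mul_sub, sum_sub_distrib, ← sum_mul, sum_step hG, one_mul]
    linarith [le_sum_step_mul hG hf i]
  have hterm := (sum_eq_zero_iff_of_nonneg fun m _ =>
    mul_nonneg (step_nonneg hG i m) (sub_nonneg.2 (hf m))).1 hzero k (mem_univ k)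
  have hstep : step w i k ≠ 0 := (div_pos hk (hG.2.2.1 i)).ne'
  linarith [(mul_eq_zero.1 hterm).resolve_left hstep]

/-- A minimum of `g` at an off-diagonal pair spreads along edges to the first walker's
neighbours, so by connectivity it reaches the diagonal, where `g` vanishes. -/
theorem nonneg_of_pairAvg_le {g : V → V → ℝ} (hdiag : ∀ i, g i i = 0)
    (hsup : ∀ i j, i ≠ j → pairAvg w g i j ≤ g i j) (i j : V) : 0 ≤ g i j := by
  by_contra! hneg
  have : Nonempty (V × V) := ⟨(i, j)⟩
  obtain ⟨⟨a, b⟩, hmin⟩ := Finite.exists_min fun p : V × V => g p.1 p.2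
  have hmin' : ∀ c d, g a b ≤ g c d := fun c d => hmin (c, d)
  have spread : ∀ c, c ≠ b → g c b = g a b → ∀ k, 0 < w c k → g k b = g a b := by
    intro c hcb hc k hk
    have hsum := hsup c b hcb
    rw [pairAvg, sum_add_distrib, hc] at hsum
    have h₂ := le_sum_step_mul hG (fun m => hmin' c m) b
    exact eq_of_sum_step_mul_le hG (fun m => hmin' m b) (by linarith) hk
  have hβ : g a b < 0 := (hmin' i j).trans_lt hneg
  have reach : ∀ c, Relation.ReflTransGen (fun x y => 0 < w x y) c b → g c b ≠ g a b := by
    intro c hc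
    induction hc using Relation.ReflTransGen.head_induction_on with
    | refl => rw [hdiag]; exact hβ.ne'
    | @head x y hxy _ ih =>
      intro hx
      by_cases hxb : x = b
      · rw [hxb, hdiag] at hx; exact hβ.ne' hx
      · exact ih (spread x hxb hx y hxy)
  exact reach a (hG.2.2.2 a b) rfl

end PairWalk

section Coalescence

omit [DecidableEq V]

def IsDiscountedCoalescent (w : V → V → ℝ) (u : ℝ) (r : V → V → ℝ) : Prop :=
  (∀ i, r i i = 0) ∧ ∀ i j, i ≠ j → r i j = 1 + (1 - u) * pairAvg w r i j

variable {w : V → V → ℝ} {u : ℝ}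

theorem IsIBD.eq_mul_pairAvg {q : V → V → ℝ} (hq : IsIBD w u q) {i j : V} (hij : i ≠ j) :
    q i j = (1 - u) * pairAvg w q i j := by
  rw [hq.2.2 i j hij, pairAvg, ← mul_assoc, div_eq_mul_one_div]
  exact congrArg _ (sum_congr rfl fun k _ => by rw [hq.1 j k])

variable (hG : IsWeightedGraph w)
include hG

theorem IsIBD.le_one (hu0 : 0 < u) (hu1 : u ≤ 1) {q : V → V → ℝ} (hq : IsIBD w u q)
    (i j : V) : q i j ≤ 1 := by
  have : Nonempty (V × V) := ⟨(i, j)⟩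
  obtain ⟨⟨a, b⟩, hmax⟩ := Finite.exists_max fun p : V × V => q p.1 p.2
  have hmax' : ∀ c d, q c d ≤ q a b := fun c d => hmax (c, d)
  refine (hmax' i j).trans (not_lt.1 fun hM => ?_)
  have hab : a ≠ b := by
    rintro rfl
    exact hM.ne' (hq.2.1 a)
  have hA : pairAvg w q a b ≤ q a b :=
    (pairAvg_mono hG hmax' a b).trans_eq (pairAvg_const hG _ a b)
  have hq_ab := hq.eq_mul_pairAvg hab
  nlinarith [mul_le_mul_of_nonneg_left hA (sub_nonneg.2 hu1)]

theorem IsIBD.isDiscountedCoalescent (hu : u ≠ 0) {q : V → V → ℝ} (hq : IsIBD w u q) :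
    IsDiscountedCoalescent w u fun a b => (1 - q a b) / u := by
  refine ⟨fun a => by simp [hq.2.1 a], fun a b hab => ?_⟩
  have hA : pairAvg w (fun a b => (1 - q a b) / u) a b = (1 - pairAvg w q a b) / u := by
    simp only [div_eq_inv_mul]
    rw [pairAvg_const_mul, pairAvg_sub, pairAvg_const hG]
  show (1 - q a b) / u = _
  rw [hA, hq.eq_mul_pairAvg hab]
  field_simp
  ring

variable {τ r : V → V → ℝ} (hτ : IsCoalescent w τ) (hu : 0 ≤ u)
  (hr : IsDiscountedCoalescent w u r) (hr_nonneg : ∀ a b, 0 ≤ r a b)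
include hτ hu hr hr_nonneg

theorem IsCoalescent.discounted_le (i j : V) : r i j ≤ τ i j := by
  refine sub_nonneg.1 <| nonneg_of_pairAvg_le hG (g := fun a b => τ a b - r a b)
    (fun a => by simp [hτ.2.1, hr.1]) (fun a b hab => ?_) i j
  have hAr : 0 ≤ pairAvg w r a b :=
    (pairAvg_const hG 0 a b).symm.trans_le (pairAvg_mono hG hr_nonneg a b)
  have hτ_ab : τ a b = 1 + pairAvg w τ a b := hτ.2.2 a b hab
  rw [pairAvg_sub, hτ_ab, hr.2 a b hab]
  linarith [mul_nonneg hu hAr]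

theorem IsCoalescent.sub_discounted_le {T : ℝ} (hT : ∀ a b, τ a b ≤ T) (i j : V) :
    τ i j - r i j ≤ u * T * τ i j := by
  suffices 0 ≤ u * T * τ i j - (τ i j - r i j) by linarith
  refine nonneg_of_pairAvg_le hG (g := fun a b => u * T * τ a b - (τ a b - r a b))
    (fun a => by simp [hτ.2.1, hr.1]) (fun a b hab => ?_) i j
  have hr_le : ∀ a b, r a b ≤ T := fun a b =>
    (hτ.discounted_le hG hu hr hr_nonneg a b).trans (hT a b)
  have hAr : pairAvg w r a b ≤ T :=
    (pairAvg_mono hG hr_le a b).trans_eq (pairAvg_const hG T a b)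
  have hτ_ab : τ a b = 1 + pairAvg w τ a b := hτ.2.2 a b hab
  rw [pairAvg_sub, pairAvg_const_mul, pairAvg_sub, hτ_ab, hr.2 a b hab]
  linarith [mul_le_mul_of_nonneg_left hAr hu]

end Coalescence

theorem ibd_low_mutation_expansion_general (w : V → V → ℝ) (hG : IsWeightedGraph w)
    (τ : V → V → ℝ) (hτ : IsCoalescent w τ)
    (q : ℝ → V → V → ℝ) (hq : ∀ u : ℝ, 0 < u → u ≤ 1 → IsIBD w u (q u))
    (i j : V) :
    Tendsto (fun u : ℝ => (1 - q u i j) / u) (nhdsWithin 0 (Set.Ioi 0))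
      (nhds (τ i j)) ∧
    (fun u : ℝ => q u i j - (1 - u * τ i j)) =O[nhdsWithin 0 (Set.Ioi 0)]
      (fun u : ℝ => u ^ 2) := by
  obtain ⟨T, hT⟩ := Finite.exists_le fun p : V × V => τ p.1 p.2
  have bound : ∀ u ∈ Set.Ioc (0 : ℝ) 1, |(1 - q u i j) / u - τ i j| ≤ T * τ i j * u := by
    rintro u ⟨hu0, hu1⟩
    have hr := (hq u hu0 hu1).isDiscountedCoalescent hG hu0.ne'
    have hr_nonneg : ∀ a b, 0 ≤ (1 - q u a b) / u := fun a b =>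
      div_nonneg (sub_nonneg.2 ((hq u hu0 hu1).le_one hG hu0 hu1 a b)) hu0.le
    have h₁ := hτ.discounted_le hG hu0.le hr hr_nonneg i j
    have h₂ := hτ.sub_discounted_le hG hu0.le hr hr_nonneg (fun a b => hT (a, b)) i j
    rw [abs_sub_comm, abs_of_nonneg (sub_nonneg.2 h₁)]
    linarith
  have hev : ∀ᶠ u in nhdsWithin (0 : ℝ) (Set.Ioi 0), u ∈ Set.Ioc 0 1 := Ioc_mem_nhdsGT one_pos
  refine ⟨?_, IsBigO.of_bound (T * τ i j) ?_⟩
  · have hlim : Tendsto (fun u : ℝ => T * τ i j * u) (nhdsWithin 0 (Set.Ioi 0)) (nhds 0) :=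
      tendsto_nhdsWithin_of_tendsto_nhds ((continuous_const_mul _).tendsto' 0 0 (mul_zero _))
    refine tendsto_sub_nhds_zero_iff.1 (squeeze_zero_norm' ?_ hlim)
    filter_upwards [hev] with u hu using bound u hu
  · filter_upwards [hev] with u hu
    have hexp : q u i j - (1 - u * τ i j) = -(u * ((1 - q u i j) / u - τ i j)) := by
      field_simp [hu.1.ne']
      ring
    rw [hexp, norm_neg, norm_mul, Real.norm_eq_abs, Real.norm_eq_abs, Real.norm_eq_abs,
      abs_of_pos hu.1, abs_of_nonneg (sq_nonneg u)]
    calc u * |(1 - q u i j) / u - τ i j| ≤ u * (T * τ i j * u) :=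
          mul_le_mul_of_nonneg_left (bound u hu) hu.1.le
      _ = T * τ i j * u ^ 2 := by ring

/-- for every pair of vertices `i, j`, `(1 − q_{ij}(u))/u → τ_{ij}`
as `u → 0⁺`; that is, `q_{ij}(u) = 1 − u τ_{ij} + O(u²)` as `u → 0⁺`. -/
theorem ibd_low_mutation_expansion (w : V → V → ℝ) (hG : IsWeightedGraph w)
    (hN : 2 ≤ Fintype.card V) (τ : V → V → ℝ) (hτ : IsCoalescent w τ)
    (q : ℝ → V → V → ℝ) (hq : ∀ u : ℝ, 0 < u → u ≤ 1 → IsIBD w u (q u))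
    (i j : V) :
    Tendsto (fun u : ℝ => (1 - q u i j) / u) (nhdsWithin 0 (Set.Ioi 0))
      (nhds (τ i j)) ∧
    (fun u : ℝ => q u i j - (1 - u * τ i j)) =O[nhdsWithin 0 (Set.Ioi 0)]
      (fun u : ℝ => u ^ 2) :=
  ibd_low_mutation_expansion_general w hG τ hτ q hq i j

end EvoGraph
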